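/- arXiv:0909.2408 — 2 statements merged into one kernel-verified Lean document; each statement's English description precedes it below -/
import Mathlib

section
/- In the cascade network, any conditional distribution p(y,z|x) that is achievable for empirical coordination with rate pair (R1,R2) using coordination codes with common randomness on a finite probability space (Ω, p(ω)) is also achievable using deterministic coordination codes (i.e., with |Ω| = 1); hence common randomness does not enlarge the coordination capacity region for empirical coordination. -/
open Filter

/-- A probability mass function on a finite alphabet. -/
def IsPMF {α : Type} [Fintype α] (p : α → ℝ) : Prop :=
  (∀ a, 0 ≤ p a) ∧ ∑ a, p a = 1

/-- Total variation distance: half the `L¹` distance. -/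
noncomputable def tv {α : Type} [Fintype α] (p q : α → ℝ) : ℝ :=
  (1 / 2) * ∑ a, |p a - q a|

open Classical in
/-- Joint type (empirical distribution) of a sequence. -/
noncomputable def jointType {α : Type} (n : ℕ) (s : Fin n → α) : α → ℝ :=
  fun a => ((Finset.univ.filter fun t => s t = a).card : ℝ) / n

open Classical in
/-- Pushforward of a mass function along a map. -/
noncomputable def pmfMap {S α : Type} [Fintype S] (p : S → ℝ) (f : S → α) : α → ℝ :=
  fun a => ∑ s, if f s = a then p s else 0

/-- Shannon entropy, base 2, with the convention `0 log 0 = 0`. -/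
noncomputable def H2 {α : Type} [Fintype α] (p : α → ℝ) : ℝ :=
  ∑ a, -(p a * Real.logb 2 (p a))

/-- Mutual information `I(f(S); g(S))` for `S ∼ p`. -/
noncomputable def MI {S α β : Type} [Fintype S] [Fintype α] [Fintype β]
    (p : S → ℝ) (f : S → α) (g : S → β) : ℝ :=
  H2 (pmfMap p f) + H2 (pmfMap p g) - H2 (pmfMap p fun s => (f s, g s))

/-- Conditional mutual information `I(f(S); g(S) | h(S))` for `S ∼ p`. -/
noncomputable def condMI {S α β γ : Type} [Fintype S] [Fintype α] [Fintype β] [Fintype γ]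
    (p : S → ℝ) (f : S → α) (g : S → β) (h : S → γ) : ℝ :=
  H2 (pmfMap p fun s => (f s, h s)) + H2 (pmfMap p fun s => (g s, h s))
    - H2 (pmfMap p fun s => (f s, g s, h s)) - H2 (pmfMap p h)

/-- The number of messages `⌈2^{nR}⌉` available at rate `R` and blocklength `n`. -/
noncomputable def msgCount (n : ℕ) (R : ℝ) : ℕ := ⌈(2 : ℝ) ^ ((n : ℝ) * R)⌉₊

open Classical in
/-- Probability of the event `E` under the (mass) distribution `μ`. -/
noncomputable def probOf {α : Type} [Fintype α] (μ : α → ℝ) (E : α → Prop) : ℝ :=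
  ∑ a, if E a then μ a else 0

open Classical in
/-- Probability of an event over `(X^n, ω)` where `X^n` is i.i.d. `p0` independent of the
common randomness `ω ∼ pω`. -/
noncomputable def probIIDCR {𝒳 : Type} [Fintype 𝒳] (p0 : 𝒳 → ℝ) (n m : ℕ)
    (pω : Fin m → ℝ) (E : (Fin n → 𝒳) → Fin m → Prop) : ℝ :=
  ∑ xs : Fin n → 𝒳, ∑ ω : Fin m, if E xs ω then (∏ t, p0 (xs t)) * pω ω else 0

/-- Achievability of `p(y,z|x)` at rates `(R1,R2)` in the cascade network, using
coordination codes with common randomness on finite probability spaces. -/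
def CascadeAchievableCR {𝒳 𝒴 𝒵 : Type} [Fintype 𝒳] [Fintype 𝒴] [Fintype 𝒵]
    (p0 : 𝒳 → ℝ) (R1 R2 : ℝ) (q : 𝒳 → 𝒴 × 𝒵 → ℝ) : Prop :=
  ∃ m : ℕ → ℕ, ∃ pω : (n : ℕ) → Fin (m n) → ℝ,
  ∃ enc : (n : ℕ) → (Fin n → 𝒳) → Fin (m n) → Fin (msgCount n R1),
  ∃ rc : (n : ℕ) → Fin (msgCount n R1) → Fin (m n) → Fin (msgCount n R2),
  ∃ decY : (n : ℕ) → Fin (msgCount n R1) → Fin (m n) → (Fin n → 𝒴),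
  ∃ decZ : (n : ℕ) → Fin (msgCount n R2) → Fin (m n) → (Fin n → 𝒵),
    (∀ n, IsPMF (pω n)) ∧
    ∀ ε > 0,
      Tendsto (fun n => probIIDCR p0 n (m n) (pω n) fun xs ω =>
          ε ≤ tv (jointType n fun t =>
                (xs t, decY n (enc n xs ω) ω t, decZ n (rc n (enc n xs ω) ω) ω t))
              (fun a => p0 a.1 * q a.1 a.2)) atTop (nhds 0)

/-- Achievability of `p(y,z|x)` at rates `(R1,R2)` in the cascade network, using
deterministic coordination codes (no common randomness, i.e. `|Ω| = 1`). -/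
def CascadeAchievableDet {𝒳 𝒴 𝒵 : Type} [Fintype 𝒳] [Fintype 𝒴] [Fintype 𝒵]
    (p0 : 𝒳 → ℝ) (R1 R2 : ℝ) (q : 𝒳 → 𝒴 × 𝒵 → ℝ) : Prop :=
  ∃ enc : (n : ℕ) → (Fin n → 𝒳) → Fin (msgCount n R1),
  ∃ rc : (n : ℕ) → Fin (msgCount n R1) → Fin (msgCount n R2),
  ∃ decY : (n : ℕ) → Fin (msgCount n R1) → (Fin n → 𝒴),
  ∃ decZ : (n : ℕ) → Fin (msgCount n R2) → (Fin n → 𝒵),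
    ∀ ε > 0,
      Tendsto (fun n => probOf (fun xs : Fin n → 𝒳 => ∏ t, p0 (xs t)) fun xs =>
          ε ≤ tv (jointType n fun t =>
                (xs t, decY n (enc n xs) t, decZ n (rc n (enc n xs)) t))
              (fun a => p0 a.1 * q a.1 a.2)) atTop (nhds 0)

/-!
Fixing the common randomness at `ω` turns a randomized code into a deterministic one, and the
error probability of the randomized code is the `p(ω)`-average of the error probabilities of
these deterministic codes, so for each blocklength some `ω` does at least as well as the average.
A single `ω n` has to serve every tolerance `ε`; it is chosen at a tolerance `e n → 0` obtained
by diagonalization, and the error probability is antitone in the tolerance.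
-/

open Topology

theorem Filter.exists_tendsto_atTop_eventually_of_forall {p : ℕ → ℕ → Prop}
    (h : ∀ k, ∀ᶠ n in atTop, p k n) :
    ∃ K : ℕ → ℕ, Tendsto K atTop atTop ∧ ∀ᶠ n in atTop, p (K n) n := by
  classical
  choose N hN using fun k => eventually_atTop.1 (h k)
  refine ⟨fun n => Nat.findGreatest (fun k => N k ≤ n) n, ?_, ?_⟩
  · refine tendsto_atTop.2 fun k => ?_
    filter_upwards [eventually_ge_atTop (max (N k) k)] with n hn
    exact Nat.le_findGreatest (le_of_max_le_right hn) (le_of_max_le_left hn)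
  · filter_upwards [eventually_ge_atTop (N 0)] with n hn
    exact hN _ n (Nat.findGreatest_spec (P := fun k => N k ≤ n) (Nat.zero_le n) hn)

theorem exists_pos_tendsto_zero_eventually_of_forall {r : ℕ → ℝ → Prop}
    (h : ∀ ε > 0, ∀ᶠ n in atTop, r n ε) :
    ∃ e : ℕ → ℝ, (∀ n, 0 < e n) ∧ Tendsto e atTop (𝓝 0) ∧ ∀ᶠ n in atTop, r n (e n) := by
  obtain ⟨K, hK, hr⟩ := exists_tendsto_atTop_eventually_of_forall
    (p := fun k n => r n ((k : ℝ) + 1)⁻¹) fun k => h _ (by positivity)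
  refine ⟨fun n => ((K n : ℝ) + 1)⁻¹, fun n => by positivity, ?_, hr⟩
  exact tendsto_inv_atTop_zero.comp
    (tendsto_atTop_add_const_right _ 1 (tendsto_natCast_atTop_atTop.comp hK))

theorem IsPMF.exists_le_sum_mul {ι : Type} [Fintype ι] {p : ι → ℝ} (hp : IsPMF p)
    (f : ι → ℝ) : ∃ i, f i ≤ ∑ j, p j * f j := by
  have : Nonempty ι := by
    by_contra hι
    simpa [not_nonempty_iff.1 hι] using hp.2
  obtain ⟨i, -, hi⟩ := Finset.exists_min_image Finset.univ f Finset.univ_nonempty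
  refine ⟨i, ?_⟩
  calc f i = ∑ j, p j * f i := by rw [← Finset.sum_mul, hp.2, one_mul]
    _ ≤ ∑ j, p j * f j :=
      Finset.sum_le_sum fun j _ => mul_le_mul_of_nonneg_left (hi j (Finset.mem_univ j)) (hp.1 j)

theorem exists_seeds_tendsto_zero_of_average {ι : ℕ → Type} [∀ n, Fintype (ι n)]
    {pω : (n : ℕ) → ι n → ℝ} (hpω : ∀ n, IsPMF (pω n)) {Q : (n : ℕ) → ι n → ℝ → ℝ}
    (hQ_nonneg : ∀ n ω ε, 0 ≤ Q n ω ε) (hQ_anti : ∀ n ω, Antitone (Q n ω))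
    (hQ : ∀ ε > 0, Tendsto (fun n => ∑ ω, pω n ω * Q n ω ε) atTop (𝓝 0)) :
    ∃ ω : (n : ℕ) → ι n, ∀ ε > 0, Tendsto (fun n => Q n (ω n) ε) atTop (𝓝 0) := by
  obtain ⟨e, -, he, he_avg⟩ := exists_pos_tendsto_zero_eventually_of_forall
    fun ε hε => (hQ ε hε).eventually_lt_const hε
  choose ω hω using fun n => (hpω n).exists_le_sum_mul fun ω => Q n ω (e n)
  refine ⟨ω, fun ε hε => squeeze_zero' (.of_forall fun n => hQ_nonneg n _ ε) ?_ he⟩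
  filter_upwards [he.eventually_le_const hε, he_avg] with n hen hn
  calc Q n (ω n) ε ≤ Q n (ω n) (e n) := hQ_anti n _ hen
    _ ≤ ∑ ω, pω n ω * Q n ω (e n) := hω n
    _ ≤ e n := hn.le

theorem probOf_nonneg {α : Type} [Fintype α] {μ : α → ℝ} (hμ : ∀ a, 0 ≤ μ a) (E : α → Prop) :
    0 ≤ probOf μ E :=
  Finset.sum_nonneg fun a _ => by split_ifs <;> simp [hμ a]

theorem probOf_mono {α : Type} [Fintype α] {μ : α → ℝ} (hμ : ∀ a, 0 ≤ μ a) {E F : α → Prop}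
    (hEF : ∀ a, E a → F a) : probOf μ E ≤ probOf μ F := by
  refine Finset.sum_le_sum fun a _ => ?_
  split_ifs with hE hF hF
  exacts [le_rfl, absurd (hEF a hE) hF, hμ a, le_rfl]

theorem antitone_probOf_le {α : Type} [Fintype α] {μ : α → ℝ} (hμ : ∀ a, 0 ≤ μ a)
    (g : α → ℝ) : Antitone fun ε => probOf μ fun a => ε ≤ g a :=
  fun _ _ hε => probOf_mono hμ fun _ => hε.trans

theorem probIIDCR_eq_sum_mul_probOf {𝒳 : Type} [Fintype 𝒳] (p0 : 𝒳 → ℝ) (n m : ℕ)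
    (pω : Fin m → ℝ) (E : (Fin n → 𝒳) → Fin m → Prop) :
    probIIDCR p0 n m pω E
      = ∑ ω, pω ω * probOf (fun xs : Fin n → 𝒳 => ∏ t, p0 (xs t)) (E · ω) := by
  unfold probIIDCR probOf
  rw [Finset.sum_comm]
  refine Finset.sum_congr rfl fun ω _ => ?_
  rw [Finset.mul_sum]
  refine Finset.sum_congr rfl fun xs _ => ?_
  split_ifs <;> ring

theorem common_randomness_does_not_help_general {𝒳 𝒴 𝒵 : Type} [Fintype 𝒳] [Fintype 𝒴] [Fintype 𝒵]
    (p0 : 𝒳 → ℝ) (hp0 : IsPMF p0) (R1 R2 : ℝ) (q : 𝒳 → 𝒴 × 𝒵 → ℝ)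
    (h : CascadeAchievableCR p0 R1 R2 q) :
    CascadeAchievableDet p0 R1 R2 q := by
  obtain ⟨m, pω, enc, rc, decY, decZ, hpω, hCR⟩ := h
  have hiid : ∀ n (xs : Fin n → 𝒳), 0 ≤ ∏ t, p0 (xs t) :=
    fun n xs => Finset.prod_nonneg fun t _ => hp0.1 (xs t)
  obtain ⟨ω, hω⟩ := exists_seeds_tendsto_zero_of_average hpω
    (Q := fun n ω ε => probOf (fun xs : Fin n → 𝒳 => ∏ t, p0 (xs t)) fun xs =>
      ε ≤ tv (jointType n fun t =>
            (xs t, decY n (enc n xs ω) ω t, decZ n (rc n (enc n xs ω) ω) ω t))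
          (fun a => p0 a.1 * q a.1 a.2))
    (fun n _ _ => probOf_nonneg (hiid n) _) (fun n _ => antitone_probOf_le (hiid n) _)
    (fun ε hε => by simpa only [probIIDCR_eq_sum_mul_probOf] using hCR ε hε)
  exact ⟨fun n xs => enc n xs (ω n), fun n i => rc n i (ω n), fun n i => decY n i (ω n),
    fun n j => decZ n j (ω n), hω⟩

/-- Common randomness does not help for empirical coordination in the cascade network:
anything achievable with common randomness is achievable with deterministic codes. -/
theorem common_randomness_does_not_help {𝒳 𝒴 𝒵 : Type} [Fintype 𝒳] [Fintype 𝒴] [Fintype 𝒵]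
    (p0 : 𝒳 → ℝ) (hp0 : IsPMF p0) (R1 R2 : ℝ) (q : 𝒳 → 𝒴 × 𝒵 → ℝ)
    (hq : ∀ x, IsPMF (q x)) (h : CascadeAchievableCR p0 R1 R2 q) :
    CascadeAchievableDet p0 R1 R2 q :=
  common_randomness_does_not_help_general p0 hp0 R1 R2 q h
end

section
/- Let (X,Y) be random variables with pmf p on the finite alphabet 𝒳 × 𝒴. Then the minimum of I(Y;U|X) over all finite random variables U jointly distributed with (X,Y) satisfying both Markov chains X − U − Y and X − Y − U equals the necessary conditional entropy H(Y†X) = min{ H(f(Y)|X) : f a function on 𝒴 such that X − f(Y) − Y is a Markov chain }. -/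
open Filter

open Classical in
/-- The joint distribution of `(X, Y, f(Y))` when `(X,Y) ∼ p`. -/
noncomputable def funJoint {𝒳 𝒴 𝒰 : Type} (p : 𝒳 × 𝒴 → ℝ) (f : 𝒴 → 𝒰) :
    𝒳 × 𝒴 × 𝒰 → ℝ :=
  fun s => if f s.2.1 = s.2.2 then p (s.1, s.2.1) else 0

/-- `X` and `Y` are conditionally independent given `U` (Markov chain `X − U − Y`)
under the joint pmf `w` on `𝒳 × 𝒴 × 𝒰`. -/
def MarkovXUY {𝒳 𝒴 𝒰 : Type} [Fintype 𝒳] [Fintype 𝒴] [Fintype 𝒰]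
    (w : 𝒳 × 𝒴 × 𝒰 → ℝ) : Prop :=
  ∀ x y u, w (x, y, u) * pmfMap w (fun s => s.2.2) u =
    pmfMap w (fun s => (s.1, s.2.2)) (x, u) * pmfMap w (fun s => (s.2.1, s.2.2)) (y, u)

/-- `X` and `U` are conditionally independent given `Y` (Markov chain `X − Y − U`)
under the joint pmf `w` on `𝒳 × 𝒴 × 𝒰`. -/
def MarkovXYU {𝒳 𝒴 𝒰 : Type} [Fintype 𝒳] [Fintype 𝒴] [Fintype 𝒰]
    (w : 𝒳 × 𝒴 × 𝒰 → ℝ) : Prop :=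
  ∀ x y u, w (x, y, u) * pmfMap w (fun s => s.2.1) y =
    pmfMap w (fun s => (s.1, s.2.1)) (x, y) * pmfMap w (fun s => (s.2.1, s.2.2)) (y, u)

/-!
Each `f` with `X − f(Y) − Y` gives the admissible auxiliary variable `U = f(Y)`, for which
`I(Y;U|X) = H(f(Y)|X)`. Conversely, if `U` satisfies both Markov chains, then
`p(x|y) = p(x|u)` whenever `p(y,u) > 0`, so the conditional distribution `C = p(·|Y)` is a
function of `U` as well as of `Y`. Hence
`0 ≤ I(Y;U|C,X) = I(Y;U|X) - H(C|X)`, and `f = p(·|·)` itself (encoded in some `Fin m`)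
satisfies `X − f(Y) − Y`.
-/

open Classical Finset Real

section Pushforward

variable {S α β : Type} [Fintype S]

lemma pmfMap_nonneg {p : S → ℝ} (hp : ∀ s, 0 ≤ p s) (f : S → α) (a : α) :
    0 ≤ pmfMap p f a :=
  sum_nonneg fun s _ => by split <;> simp [hp s]

lemma sum_pmfMap_mul [Fintype α] (p : S → ℝ) (f : S → α) (F : α → ℝ) :
    ∑ a, pmfMap p f a * F a = ∑ s, p s * F (f s) := by
  simp only [pmfMap, sum_mul, ite_mul, zero_mul]
  rw [sum_comm]
  simp

lemma sum_pmfMap [Fintype α] (p : S → ℝ) (f : S → α) : ∑ a, pmfMap p f a = ∑ s, p s := by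
  simpa using sum_pmfMap_mul p f 1

lemma IsPMF.pmfMap [Fintype α] {p : S → ℝ} (hp : IsPMF p) (f : S → α) : IsPMF (pmfMap p f) :=
  ⟨pmfMap_nonneg hp.1 f, by rw [sum_pmfMap, hp.2]⟩

lemma pmfMap_id (p : S → ℝ) : pmfMap p id = p := by
  funext s
  simp [pmfMap]

lemma pmfMap_comp [Fintype α] (p : S → ℝ) (f : S → α) (g : α → β) :
    pmfMap (pmfMap p f) g = pmfMap p (g ∘ f) := by
  funext b
  simpa [pmfMap] using sum_pmfMap_mul p f fun a => if g a = b then 1 else 0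

lemma le_pmfMap_apply {p : S → ℝ} (hp : ∀ s, 0 ≤ p s) (f : S → α) (s : S) :
    p s ≤ pmfMap p f (f s) := by
  simpa [pmfMap] using single_le_sum (f := fun t => if f t = f s then p t else 0)
    (fun t _ => by split <;> simp [hp t]) (mem_univ s)

lemma pmfMap_prod_snd_apply {α β : Type} [Fintype α] [Fintype β] (p : α × β → ℝ) (b : β) :
    pmfMap p Prod.snd b = ∑ a, p (a, b) := by
  simp [pmfMap, Fintype.sum_prod_type]

lemma sum_pmfMap_prod_apply [Fintype α] [Fintype β] (p : S → ℝ) (f : S → α) (g : S → β)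
    (b : β) : ∑ a, pmfMap p (fun s => (f s, g s)) (a, b) = pmfMap p g b := by
  rw [← pmfMap_prod_snd_apply, pmfMap_comp]
  rfl

end Pushforward

section Entropy

variable {S α β : Type} [Fintype S] [Fintype α] [Fintype β]

lemma H2_pmfMap (p : S → ℝ) (f : S → α) :
    H2 (pmfMap p f) = -∑ s, p s * logb 2 (pmfMap p f (f s)) := by
  rw [H2, sum_neg_distrib, sum_pmfMap_mul p f fun a => logb 2 (pmfMap p f a)]

lemma H2_pmfMap_eq_of_ae_iff {p : S → ℝ} {f : S → α} {g : S → β}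
    (h : ∀ s t, p s ≠ 0 → p t ≠ 0 → (f t = f s ↔ g t = g s)) :
    H2 (pmfMap p f) = H2 (pmfMap p g) := by
  rw [H2_pmfMap, H2_pmfMap]
  congr 1
  refine sum_congr rfl fun s _ => ?_
  by_cases hs : p s = 0
  · simp [hs]
  have : pmfMap p f (f s) = pmfMap p g (g s) := sum_congr rfl fun t _ => by
    by_cases ht : p t = 0
    · simp [ht]
    · simp only [h s t hs ht]
  rw [this]

lemma sub_le_mul_log_div {q σ : ℝ} (hq : 0 ≤ q) (hσ : 0 ≤ σ) (h : 0 < q → 0 < σ) :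
    q - σ ≤ q * log (q / σ) := by
  rcases hσ.eq_or_lt with rfl | hσ
  · obtain rfl : q = 0 := by by_contra hq0; exact (h (hq.lt_of_ne' hq0)).false
    simp
  · have := mul_le_mul_of_nonneg_left (self_sub_one_le_mul_log (div_nonneg hq hσ.le)) hσ.le
    field_simp at this
    linarith

lemma sum_mul_log_div_nonneg {ι : Type} [Fintype ι] {q σ : ι → ℝ} (hq : ∀ i, 0 ≤ q i)
    (hσ : ∀ i, 0 ≤ σ i) (hqσ : ∀ i, 0 < q i → 0 < σ i) (hsum : ∑ i, σ i ≤ ∑ i, q i) :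
    0 ≤ ∑ i, q i * log (q i / σ i) :=
  calc (0 : ℝ) ≤ ∑ i, (q i - σ i) := by rw [sum_sub_distrib]; linarith
    _ ≤ ∑ i, q i * log (q i / σ i) := sum_le_sum fun i _ => sub_le_mul_log_div (hq i) (hσ i) (hqσ i)

end Entropy

section ConditionalMutualInformation

variable {α β γ : Type} [Fintype α] [Fintype β] [Fintype γ]

lemma sum_mul_div_pmfMap_le {q : α × β × γ → ℝ} (hq : ∀ t, 0 ≤ q t) :
    ∑ t : α × β × γ, pmfMap q (fun t => (t.1, t.2.2)) (t.1, t.2.2) * pmfMap q Prod.snd t.2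
        / pmfMap q (fun t => t.2.2) t.2.2 ≤ ∑ t, q t := by
  set A := pmfMap q fun t => (t.1, t.2.2)
  set B := pmfMap q Prod.snd
  set C := pmfMap q fun t => t.2.2
  calc ∑ t : α × β × γ, A (t.1, t.2.2) * B t.2 / C t.2.2
      = ∑ bc : β × γ, B bc * ((∑ a, A (a, bc.2)) / C bc.2) := by
        rw [Fintype.sum_prod_type, sum_comm]
        simp only [mul_div_assoc', mul_sum, sum_div]
        exact sum_congr rfl fun _ _ => sum_congr rfl fun _ _ => by ring
    _ ≤ ∑ bc : β × γ, B bc := sum_le_sum fun bc _ => by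
        rw [sum_pmfMap_prod_apply]
        exact mul_le_of_le_one_right (pmfMap_nonneg hq _ _) (div_self_le_one _)
    _ = ∑ t, q t := sum_pmfMap q _

lemma condMI_coords_nonneg {q : α × β × γ → ℝ} (hq : ∀ t, 0 ≤ q t) :
    0 ≤ condMI q Prod.fst (fun t => t.2.1) (fun t => t.2.2) := by
  set A := pmfMap q fun t => (t.1, t.2.2)
  set B := pmfMap q Prod.snd
  set C := pmfMap q fun t => t.2.2
  set σ : α × β × γ → ℝ := fun t => A (t.1, t.2.2) * B t.2 / C t.2.2
  have hpos : ∀ t, 0 < q t → 0 < A (t.1, t.2.2) ∧ 0 < B t.2 ∧ 0 < C t.2.2 := fun t ht =>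
    ⟨ht.trans_le (le_pmfMap_apply hq _ t), ht.trans_le (le_pmfMap_apply hq _ t),
      ht.trans_le (le_pmfMap_apply hq _ t)⟩
  have hσ : ∀ t, 0 ≤ σ t := fun t => div_nonneg
    (mul_nonneg (pmfMap_nonneg hq _ _) (pmfMap_nonneg hq _ _)) (pmfMap_nonneg hq _ _)
  have hqσ : ∀ t, 0 < q t → 0 < σ t := fun t ht => by
    obtain ⟨hA, hB, hC⟩ := hpos t ht
    positivity
  have hcondMI : condMI q Prod.fst (fun t => t.2.1) (fun t => t.2.2)
      = (∑ t, q t * log (q t / σ t)) / log 2 := by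
    have hq' : (pmfMap q fun t => (t.1, t.2.1, t.2.2)) = q := pmfMap_id q
    have hterm : ∀ t, q t * log (q t / σ t) / log 2 = -(q t * logb 2 (A (t.1, t.2.2)))
        + -(q t * logb 2 (B t.2)) - -(q t * logb 2 (q t)) - -(q t * logb 2 (C t.2.2)) := by
      intro t
      rcases (hq t).eq_or_lt with ht | ht
      · simp [← ht]
      obtain ⟨hA, hB, hC⟩ := hpos t ht
      simp only [σ, logb, log_div ht.ne' (hqσ t ht).ne', log_div (mul_pos hA hB).ne' hC.ne',
        log_mul hA.ne' hB.ne']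
      ring
    rw [condMI, hq', H2_pmfMap, H2_pmfMap, H2_pmfMap, H2, sum_div, sum_congr rfl fun t _ => hterm t]
    simp only [sum_add_distrib, sum_sub_distrib, sum_neg_distrib]
    rfl
  rw [hcondMI]
  exact div_nonneg (sum_mul_log_div_nonneg hq hσ hqσ (sum_mul_div_pmfMap_le hq))
    (log_nonneg one_le_two)

lemma condMI_pmfMap {S : Type} [Fintype S] {δ : Type} [Fintype δ] (w : S → ℝ) (k : S → δ)
    (f : δ → α) (g : δ → β) (h : δ → γ) :
    condMI (pmfMap w k) f g h = condMI w (f ∘ k) (g ∘ k) (h ∘ k) := by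
  simp only [condMI, pmfMap_comp]
  rfl

lemma condMI_nonneg {S : Type} [Fintype S] {w : S → ℝ} (hw : ∀ s, 0 ≤ w s) (f : S → α)
    (g : S → β) (h : S → γ) : 0 ≤ condMI w f g h := by
  have := condMI_coords_nonneg (pmfMap_nonneg hw fun s => (f s, g s, h s))
  rwa [condMI_pmfMap] at this

end ConditionalMutualInformation

section FunJoint

variable {𝒳 𝒴 𝒰 : Type}

lemma sum_funJoint [Fintype 𝒰] (p : 𝒳 × 𝒴 → ℝ) (f : 𝒴 → 𝒰) (x : 𝒳) (y : 𝒴) :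
    ∑ u, funJoint p f (x, y, u) = p (x, y) := by
  simp [funJoint]

variable [Fintype 𝒳] [Fintype 𝒴]

lemma funJoint_eq_pmfMap (p : 𝒳 × 𝒴 → ℝ) (f : 𝒴 → 𝒰) :
    funJoint p f = pmfMap p fun a => (a.1, a.2, f a.2) := by
  funext ⟨x, y, u⟩
  simp [funJoint, pmfMap, Fintype.sum_prod_type, Prod.ext_iff, ite_and, eq_comm]

lemma IsPMF.funJoint [Fintype 𝒰] {p : 𝒳 × 𝒴 → ℝ} (hp : IsPMF p) (f : 𝒴 → 𝒰) :
    IsPMF (funJoint p f) := by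
  rw [funJoint_eq_pmfMap]
  exact hp.pmfMap _

lemma pmfMap_funJoint {α : Type} [Fintype 𝒰] (p : 𝒳 × 𝒴 → ℝ) (f : 𝒴 → 𝒰)
    (j : 𝒳 × 𝒴 × 𝒰 → α) : pmfMap (funJoint p f) j = pmfMap p fun a => j (a.1, a.2, f a.2) := by
  rw [funJoint_eq_pmfMap, pmfMap_comp]
  rfl

lemma pmfMap_graph_apply (p : 𝒳 × 𝒴 → ℝ) (f : 𝒴 → 𝒰) (y : 𝒴) (u : 𝒰) :
    pmfMap p (fun a => (a.2, f a.2)) (y, u) = if f y = u then ∑ x, p (x, y) else 0 := by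
  by_cases h : f y = u <;> simp [pmfMap, Fintype.sum_prod_type, Prod.ext_iff, ite_and, h]

variable [Fintype 𝒰]

lemma markovXYU_funJoint (p : 𝒳 × 𝒴 → ℝ) (f : 𝒴 → 𝒰) : MarkovXYU (funJoint p f) := by
  intro x y u
  simp only [pmfMap_funJoint, pmfMap_graph_apply]
  rw [show (pmfMap p fun a => (a.1, a.2)) = p from pmfMap_id p, ← pmfMap_prod_snd_apply]
  by_cases h : f y = u <;> simp [funJoint, h]

lemma markovXUY_funJoint {p : 𝒳 × 𝒴 → ℝ} {f : 𝒴 → 𝒰}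
    (hf : ∀ y y', f y = f y' → ∀ x, p (x, y) * ∑ x', p (x', y') = p (x, y') * ∑ x', p (x', y)) :
    MarkovXUY (funJoint p f) := by
  intro x y u
  simp only [pmfMap_funJoint, pmfMap_graph_apply]
  by_cases h : f y = u
  · have hU : pmfMap p (fun a => f a.2) u = ∑ y' : 𝒴, if f y' = u then ∑ x', p (x', y') else 0 := by
      simp only [pmfMap, Fintype.sum_prod_type]
      rw [sum_comm]
      exact sum_congr rfl fun y' _ => by split_ifs <;> simp
    have hXU : pmfMap p (fun a => (a.1, f a.2)) (x, u)
        = ∑ y', if f y' = u then p (x, y') else 0 := by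
      simp [pmfMap, Fintype.sum_prod_type, Prod.ext_iff, ite_and]
    simp only [funJoint, h, if_true]
    rw [hU, hXU, mul_sum, sum_mul]
    refine sum_congr rfl fun y' _ => ?_
    split_ifs with h'
    · exact hf y y' (h.trans h'.symm) x
    · simp
  · simp [funJoint, h]

lemma condMI_funJoint (p : 𝒳 × 𝒴 → ℝ) (f : 𝒴 → 𝒰) :
    condMI (funJoint p f) (fun s => s.2.1) (fun s => s.2.2) (fun s => s.1)
      = H2 (pmfMap p fun a => (f a.2, a.1)) - H2 (pmfMap p fun a => a.1) := by
  have hYX : H2 (pmfMap p fun a => (a.2, a.1)) = H2 (pmfMap p fun a => (a.2, f a.2, a.1)) :=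
    H2_pmfMap_eq_of_ae_iff fun s t _ _ => by simp [Prod.ext_iff]; tauto
  rw [funJoint_eq_pmfMap, condMI_pmfMap, condMI]
  simp only [Function.comp_def]
  rw [hYX]
  ring

end FunJoint

section ConditionalDistribution

variable {𝒳 𝒴 𝒵 : Type} [Fintype 𝒳]

/-- The conditional distribution `p(· | y)`, equal to `0` when `y` has probability zero. -/
noncomputable def condDist (p : 𝒳 × 𝒴 → ℝ) (y : 𝒴) : 𝒳 → ℝ :=
  fun x => p (x, y) / ∑ x', p (x', y)

lemma condDist_eq_zero_iff {p : 𝒳 × 𝒴 → ℝ} {y : 𝒴} :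
    condDist p y = 0 ↔ ∑ x, p (x, y) = 0 := by
  refine ⟨fun h => ?_, fun h => funext fun x => by simp [condDist, h]⟩
  by_contra hy
  exact hy (sum_eq_zero fun x _ => by simpa [condDist, hy] using congrFun h x)

lemma mul_sum_eq_mul_sum_of_condDist_eq {p : 𝒳 × 𝒴 → ℝ} {y y' : 𝒴}
    (h : condDist p y = condDist p y') (x : 𝒳) :
    p (x, y) * ∑ x', p (x', y') = p (x, y') * ∑ x', p (x', y) := by
  have hzero : ∑ x', p (x', y) = 0 ↔ ∑ x', p (x', y') = 0 := by
    rw [← condDist_eq_zero_iff, ← condDist_eq_zero_iff, h]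
  by_cases hy : ∑ x', p (x', y) = 0
  · simp [hy, hzero.1 hy]
  · exact (div_eq_div_iff hy (mt hzero.2 hy)).1 (congrFun h x)

lemma condDist_eq_of_mul_eq {p : 𝒳 × 𝒴 → ℝ} {q : 𝒳 × 𝒵 → ℝ} {y : 𝒴} {z : 𝒵}
    (hy : ∑ x, p (x, y) ≠ 0) (hz : ∑ x, q (x, z) ≠ 0)
    (h : ∀ x, p (x, y) * ∑ x', q (x', z) = q (x, z) * ∑ x', p (x', y)) :
    condDist p y = condDist q z :=
  funext fun x => (div_eq_div_iff hy hz).2 (h x)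

end ConditionalDistribution

lemma exists_fin_encoding {ι β : Type} [Fintype ι] (g : ι → β) :
    ∃ m, ∃ c : ι → Fin m, ∀ i j, c i = c j ↔ g i = g j := by
  classical
  exact ⟨_, fun i => Fintype.equivFin (Set.range g) ⟨g i, i, rfl⟩,
    fun i j => by simp [Subtype.ext_iff]⟩

section DoubleMarkov

variable {𝒳 𝒴 𝒰 : Type} [Fintype 𝒳] [Fintype 𝒴] [Fintype 𝒰]

lemma pmfMap_eq_of_sum_eq {w : 𝒳 × 𝒴 × 𝒰 → ℝ} {p : 𝒳 × 𝒴 → ℝ}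
    (hmarg : ∀ x y, ∑ u, w (x, y, u) = p (x, y)) : (pmfMap w fun s => (s.1, s.2.1)) = p := by
  funext ⟨x, y⟩
  rw [← hmarg]
  simp only [pmfMap, Fintype.sum_prod_type, Prod.mk.injEq]
  rw [sum_eq_single x (fun b _ hb => by simp [hb]) (by simp),
    sum_eq_single y (fun b _ hb => by simp [hb]) (by simp)]
  simp

lemma condDist_eq_of_markov {w : 𝒳 × 𝒴 × 𝒰 → ℝ} (hw : ∀ s, 0 ≤ w s)
    (hXUY : MarkovXUY w) (hXYU : MarkovXYU w) {x : 𝒳} {y : 𝒴} {u : 𝒰}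
    (hs : w (x, y, u) ≠ 0) :
    condDist (pmfMap w fun s => (s.1, s.2.1)) y = condDist (pmfMap w fun s => (s.1, s.2.2)) u := by
  have hpos : 0 < w (x, y, u) := (hw _).lt_of_ne' hs
  have hYU : 0 < pmfMap w (fun s => (s.2.1, s.2.2)) (y, u) :=
    hpos.trans_le (le_pmfMap_apply hw _ (x, y, u))
  have hY : 0 < pmfMap w (fun s => s.2.1) y := hpos.trans_le (le_pmfMap_apply hw _ (x, y, u))
  have hU : 0 < pmfMap w (fun s => s.2.2) u := hpos.trans_le (le_pmfMap_apply hw _ (x, y, u))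
  refine condDist_eq_of_mul_eq (by rw [sum_pmfMap_prod_apply]; exact hY.ne')
    (by rw [sum_pmfMap_prod_apply]; exact hU.ne') fun x' => ?_
  rw [sum_pmfMap_prod_apply, sum_pmfMap_prod_apply]
  refine mul_right_cancel₀ hYU.ne' ?_
  linear_combination (-pmfMap w (fun s => s.2.2) u) * hXYU x' y u
    + pmfMap w (fun s => s.2.1) y * hXUY x' y u

lemma sub_le_condMI_of_markov {p : 𝒳 × 𝒴 → ℝ} {w : 𝒳 × 𝒴 × 𝒰 → ℝ} (hw : ∀ s, 0 ≤ w s)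
    (hmarg : ∀ x y, ∑ u, w (x, y, u) = p (x, y)) (hXUY : MarkovXUY w) (hXYU : MarkovXYU w)
    {γ : Type} [Fintype γ] {c : 𝒴 → γ} (hc : ∀ y y', condDist p y = condDist p y' → c y = c y') :
    H2 (pmfMap p fun a => (c a.2, a.1)) - H2 (pmfMap p fun a => a.1)
      ≤ condMI w (fun s => s.2.1) (fun s => s.2.2) (fun s => s.1) := by
  have hwXY := pmfMap_eq_of_sum_eq hmarg
  have hdet : ∀ s t, w s ≠ 0 → w t ≠ 0 → t.2.2 = s.2.2 → c t.2.1 = c s.2.1 := by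
    rintro ⟨x, y, u⟩ ⟨x', y', u'⟩ hs ht (rfl : u' = u)
    have := condDist_eq_of_markov hw hXUY hXYU hs
    rw [← condDist_eq_of_markov hw hXUY hXYU ht, hwXY] at this
    exact hc _ _ this.symm
  have hYX : H2 (pmfMap w fun s => (s.2.1, c s.2.1, s.1)) = H2 (pmfMap w fun s => (s.2.1, s.1)) :=
    H2_pmfMap_eq_of_ae_iff fun s t _ _ => by simp [Prod.ext_iff]; tauto
  have hUX : H2 (pmfMap w fun s => (s.2.2, c s.2.1, s.1)) = H2 (pmfMap w fun s => (s.2.2, s.1)) :=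
    H2_pmfMap_eq_of_ae_iff fun s t hs ht => by
      simp only [Prod.mk.injEq]
      constructor
      · exact fun h => ⟨h.1, h.2.2⟩
      · exact fun h => ⟨h.1, hdet s t hs ht h.1, h.2⟩
  have hYUX : H2 (pmfMap w fun s => (s.2.1, s.2.2, c s.2.1, s.1))
      = H2 (pmfMap w fun s => (s.2.1, s.2.2, s.1)) :=
    H2_pmfMap_eq_of_ae_iff fun s t _ _ => by simp [Prod.ext_iff]; tauto
  have hCX : pmfMap w (fun s => (c s.2.1, s.1)) = pmfMap p fun a => (c a.2, a.1) := by
    rw [← hwXY, pmfMap_comp]; rfl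
  have hX : pmfMap w (fun s => s.1) = pmfMap p fun a => a.1 := by
    rw [← hwXY, pmfMap_comp]; rfl
  have h0 := condMI_nonneg hw (fun s => s.2.1) (fun s => s.2.2) (fun s => (c s.2.1, s.1))
  simp only [condMI] at h0 ⊢
  rw [hYX, hUX, hYUX, hCX] at h0
  rw [hX]
  linarith

end DoubleMarkov

/-- The minimum of `I(Y;U|X)` over all finite auxiliary variables `U` satisfying both
Markov chains `X − U − Y` and `X − Y − U` equals the necessary conditional entropy
`H(Y†X) = min { H(f(Y)|X) : X − f(Y) − Y }`. -/
theorem necessary_conditional_entropy {𝒳 𝒴 : Type} [Fintype 𝒳] [Fintype 𝒴]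
    (p : 𝒳 × 𝒴 → ℝ) (hp : IsPMF p) :
    sInf {r : ℝ | ∃ m : ℕ, ∃ w : 𝒳 × 𝒴 × Fin m → ℝ, IsPMF w ∧
        (∀ x y, (∑ u, w (x, y, u)) = p (x, y)) ∧
        MarkovXUY w ∧ MarkovXYU w ∧
        r = condMI w (fun s => s.2.1) (fun s => s.2.2) (fun s => s.1)} =
      sInf {r : ℝ | ∃ m : ℕ, ∃ f : 𝒴 → Fin m,
        MarkovXUY (funJoint p f) ∧
        r = H2 (pmfMap p fun a => (f a.2, a.1)) - H2 (pmfMap p fun a => a.1)} := by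
  obtain ⟨m, c, hc⟩ := exists_fin_encoding (condDist p)
  have hc_markov : MarkovXUY (funJoint p c) := markovXUY_funJoint fun y y' h =>
    mul_sum_eq_mul_sum_of_condDist_eq ((hc y y').1 h)
  refine le_antisymm (csInf_le_csInf ?_ ⟨_, m, c, hc_markov, rfl⟩ ?_)
    (le_csInf ⟨_, m, funJoint p c, hp.funJoint c, sum_funJoint p c, hc_markov,
      markovXYU_funJoint p c, rfl⟩ ?_)
  · exact ⟨0, by rintro r ⟨n, w, hw, -, -, -, rfl⟩; exact condMI_nonneg hw.1 _ _ _⟩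
  · rintro r ⟨n, f, hf, rfl⟩
    exact ⟨n, funJoint p f, hp.funJoint f, sum_funJoint p f, hf, markovXYU_funJoint p f,
      (condMI_funJoint p f).symm⟩
  · rintro r ⟨n, w, hw, hmarg, hXUY, hXYU, rfl⟩
    have hbdd : BddBelow {r : ℝ | ∃ m : ℕ, ∃ f : 𝒴 → Fin m, MarkovXUY (funJoint p f) ∧
        r = H2 (pmfMap p fun a => (f a.2, a.1)) - H2 (pmfMap p fun a => a.1)} := by
      refine ⟨0, ?_⟩
      rintro r ⟨n, f, -, rfl⟩
      rw [← condMI_funJoint]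
      exact condMI_nonneg (hp.funJoint f).1 _ _ _
    exact (csInf_le hbdd ⟨m, c, hc_markov, rfl⟩).trans
      (sub_le_condMI_of_markov hw.1 hmarg hXUY hXYU fun y y' h => (hc y y').2 h)
end
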